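/- Let L be a subdirectly irreducible pk-algebra satisfying a* ≤ C(b) ∨ T(a)* for all a, b ∈ L, and let d be its least dense element. Then the interval [d, d'] = {a ∈ L : d ≤ a and a ≤ d'} has at most three elements. -/

import Mathlib

/-! For a dense `e`, "same meet with `e` and same join with `e'`" is a congruence, and for
`m ≤ m'` so is "same projection `(x ∨ m) ∧ m'` onto `[m, m']`, same `x*` and same `x'*`".
By lattice cancellation, the first kind of congruence for `a` and for `a'` meet in the identity,
and so do the two congruences for `m`; in a subdirectly irreducible algebra one of each pair is
then trivial. For `a` strictly inside `[d, d']` this makes `a` comparable with `a'`, and then, with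
`m` the smaller of the two, forces `a = a'`; the identity `a* ≤ C(b) ∨ T(a)*` enters only to
make `d'` dense, so that the second congruence identifies `m` with `d`. In a Kleene algebra `'`
has at most one fixed point, so `[d, d']` consists of `d`, `d'` and at most one more element. -/

/-- A pseudocomplemented De Morgan algebra (pm-algebra): a bounded distributive
lattice with a De Morgan involution `dm` and a pseudocomplement `pc`. -/
class PMAlgebra (L : Type*) extends DistribLattice L, BoundedOrder L where
  dm : L → L
  pc : L → L
  dm_dm : ∀ a : L, dm (dm a) = a
  dm_inf : ∀ a b : L, dm (a ⊓ b) = dm a ⊔ dm b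
  pc_iff : ∀ a b : L, a ⊓ b = ⊥ ↔ b ≤ pc a

namespace PMAlgebra

variable {L : Type*} [PMAlgebra L]

/-- A congruence of a pm-algebra. -/
def IsCongruence (θ : L → L → Prop) : Prop :=
  Equivalence θ ∧
  (∀ a b c d : L, θ a b → θ c d → θ (a ⊓ c) (b ⊓ d)) ∧
  (∀ a b c d : L, θ a b → θ c d → θ (a ⊔ c) (b ⊔ d)) ∧
  (∀ a b : L, θ a b → θ (dm a) (dm b)) ∧
  (∀ a b : L, θ a b → θ (pc a) (pc b))

/-- `L` is simple: it has more than one element and its only congruences are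
equality and the total relation. -/
def Simple (L : Type*) [PMAlgebra L] : Prop :=
  Nontrivial L ∧ ∀ θ : L → L → Prop, IsCongruence θ →
    θ = (fun a b => a = b) ∨ θ = (fun _ _ => True)

/-- `L` is subdirectly irreducible: there is a congruence `μ ≠ Eq` contained in
every congruence different from equality. -/
def SubdirectlyIrreducible (L : Type*) [PMAlgebra L] : Prop :=
  ∃ μ : L → L → Prop, IsCongruence μ ∧ μ ≠ (fun a b => a = b) ∧
    ∀ θ : L → L → Prop, IsCongruence θ → θ ≠ (fun a b => a = b) →
      ∀ a b : L, μ a b → θ a b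

/-- A prime filter of the underlying lattice of `L`. -/
def IsPrimeFilter (P : Set L) : Prop :=
  P.Nonempty ∧ P ≠ Set.univ ∧
  (∀ a b : L, a ∈ P → a ≤ b → b ∈ P) ∧
  (∀ a b : L, a ∈ P → b ∈ P → a ⊓ b ∈ P) ∧
  (∀ a b : L, a ⊔ b ∈ P → a ∈ P ∨ b ∈ P)

/-- The Birula–Rasiowa transformation. -/
def phi (P : Set L) : Set L := {a : L | dm a ∉ P}

/-- `P` is a maximal prime filter. -/
def IsMaximalPF (P : Set L) : Prop :=
  IsPrimeFilter P ∧ ∀ Q : Set L, IsPrimeFilter Q → P ⊆ Q → Q = P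

/-- `P` is a minimal prime filter. -/
def IsMinimalPF (P : Set L) : Prop :=
  IsPrimeFilter P ∧ ∀ Q : Set L, IsPrimeFilter Q → Q ⊆ P → Q = P

/-- The body of `L`: prime filters that are neither maximal nor minimal. -/
def body (L : Type*) [PMAlgebra L] : Set (Set L) :=
  {P : Set L | IsPrimeFilter P ∧ ¬ IsMaximalPF P ∧ ¬ IsMinimalPF P}

/-- The prime filter space of `L` is φ-connected. -/
def PhiConnected (L : Type*) [PMAlgebra L] : Prop :=
  ∀ S : Set (Set L), S ⊆ {P : Set L | IsPrimeFilter P} → S.Nonempty →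
    (∀ P Q : Set L, P ∈ S → IsPrimeFilter Q → P ⊆ Q → Q ∈ S) →
    (∀ P Q : Set L, P ∈ S → IsPrimeFilter Q → Q ⊆ P → Q ∈ S) →
    (∀ P : Set L, P ∈ S → phi P ∈ S) →
    S = {P : Set L | IsPrimeFilter P}

/-- The Kleene identity. -/
def Kleene (L : Type*) [PMAlgebra L] : Prop :=
  ∀ a b : L, a ⊓ dm a ≤ b ⊔ dm b

/-- The term `C(x) = (x ∧ x') ∨ (x ∧ x')*`. -/
def C (x : L) : L := (x ⊓ dm x) ⊔ pc (x ⊓ dm x)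

/-- The term `T(x) = C(x) ∧ C(x)'`. -/
def T (x : L) : L := C x ⊓ dm (C x)

theorem dm_sup (a b : L) : dm (a ⊔ b) = dm a ⊓ dm b := by
  rw [← dm_dm (dm a ⊓ dm b), dm_inf, dm_dm, dm_dm]

theorem dm_anti : Antitone (dm : L → L) := fun a b h => by
  have := dm_inf a b
  rw [inf_eq_left.mpr h] at this
  exact this ▸ le_sup_right

theorem le_dm_comm {a b : L} : a ≤ dm b ↔ b ≤ dm a :=
  ⟨fun h => dm_dm b ▸ dm_anti h, fun h => dm_dm a ▸ dm_anti h⟩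

theorem inf_pc_self (a : L) : a ⊓ pc a = ⊥ := (pc_iff a _).mpr le_rfl

theorem pc_anti : Antitone (pc : L → L) := fun a b h =>
  (pc_iff a _).mp (le_bot_iff.mp (inf_pc_self b ▸ inf_le_inf_right _ h))

theorem pc_eq_bot_of_le {d a : L} (hd : pc d = ⊥) (h : d ≤ a) : pc a = ⊥ :=
  le_bot_iff.mp (hd ▸ pc_anti h)

theorem pc_top : pc (⊤ : L) = ⊥ := by simpa using inf_pc_self (⊤ : L)

theorem pc_sup (a b : L) : pc (a ⊔ b) = pc a ⊓ pc b :=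
  eq_of_forall_le_iff fun z => by simp only [le_inf_iff, ← pc_iff, inf_sup_right, sup_eq_bot_iff]

theorem le_pc_inf_iff {x u z : L} : z ≤ pc (x ⊓ u) ↔ x ⊓ z ≤ pc u := by
  rw [← pc_iff, ← pc_iff, inf_comm x u, inf_assoc]

theorem pc_inf_congr_right {u v : L} (h : pc u = pc v) (x : L) : pc (x ⊓ u) = pc (x ⊓ v) :=
  eq_of_forall_le_iff fun _ => by rw [le_pc_inf_iff, le_pc_inf_iff, h]

theorem pc_inf_congr {x y u v : L} (hx : pc x = pc y) (hu : pc u = pc v) :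
    pc (x ⊓ u) = pc (y ⊓ v) :=
  calc pc (x ⊓ u) = pc (x ⊓ v) := pc_inf_congr_right hu x
    _ = pc (v ⊓ x) := by rw [inf_comm]
    _ = pc (v ⊓ y) := pc_inf_congr_right hx v
    _ = pc (y ⊓ v) := by rw [inf_comm]

theorem pc_inf_of_pc_eq_bot {e : L} (he : pc e = ⊥) (x : L) : pc (x ⊓ e) = pc x := by
  rw [pc_inf_congr_right (he.trans pc_top.symm), inf_top_eq]

theorem pc_dm_eq_bot (hid : ∀ a b : L, pc a ≤ C b ⊔ pc (T a)) {d : L} (hd : pc d = ⊥)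
    (hdd : d ≤ dm d) : pc (dm d) = ⊥ := by
  have hC : C (dm d) = d := by
    rw [C, dm_dm, inf_eq_right.mpr hdd, hd, sup_bot_eq]
  have hT : T (dm d) = d := by
    rw [T, hC, inf_eq_left.mpr hdd]
  have hle : pc (dm d) ≤ dm d := by
    have h := hid (dm d) (dm d)
    rw [hC, hT, hd, sup_bot_eq] at h
    exact h.trans hdd
  rw [← inf_pc_self (dm d), inf_eq_right.mpr hle]

def meetJoinRel (e : L) : L → L → Prop := fun x y =>
  x ⊓ e = y ⊓ e ∧ x ⊔ dm e = y ⊔ dm e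

theorem isCongruence_meetJoinRel {e : L} (he : pc e = ⊥) : IsCongruence (meetJoinRel e) := by
  refine ⟨⟨fun _ => ⟨rfl, rfl⟩, fun h => ⟨h.1.symm, h.2.symm⟩,
      fun h₁ h₂ => ⟨h₁.1.trans h₂.1, h₁.2.trans h₂.2⟩⟩, ?_, ?_, ?_, ?_⟩
  · rintro a b c d ⟨h₁, h₂⟩ ⟨h₃, h₄⟩
    exact ⟨by rw [inf_inf_distrib_right, h₁, h₃, ← inf_inf_distrib_right],
      by rw [sup_inf_right, h₂, h₄, ← sup_inf_right]⟩
  · rintro a b c d ⟨h₁, h₂⟩ ⟨h₃, h₄⟩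
    exact ⟨by rw [inf_sup_right, h₁, h₃, ← inf_sup_right],
      by rw [sup_sup_distrib_right, h₂, h₄, ← sup_sup_distrib_right]⟩
  · rintro a b ⟨h₁, h₂⟩
    refine ⟨?_, ?_⟩
    · simpa only [dm_sup, dm_dm] using congrArg dm h₂
    · simpa only [dm_inf] using congrArg dm h₁
  · rintro a b ⟨h₁, -⟩
    have hab : pc a = pc b := by
      rw [← pc_inf_of_pc_eq_bot he a, ← pc_inf_of_pc_eq_bot he b, h₁]
    exact ⟨by rw [hab], by rw [hab]⟩

def intervalRel (m : L) : L → L → Prop := fun x y =>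
  (x ⊔ m) ⊓ dm m = (y ⊔ m) ⊓ dm m ∧ pc x = pc y ∧ pc (dm x) = pc (dm y)

theorem isCongruence_intervalRel {m : L} (hm : m ≤ dm m) :
    IsCongruence (intervalRel m) := by
  have hproj : ∀ x : L, (dm x ⊔ m) ⊓ dm m = dm ((x ⊔ m) ⊓ dm m) := fun x => by
    rw [dm_inf, dm_sup, dm_dm, sup_inf_right, sup_eq_left.mpr hm]
  refine ⟨⟨fun _ => ⟨rfl, rfl, rfl⟩, fun h => ⟨h.1.symm, h.2.1.symm, h.2.2.symm⟩,
      fun h₁ h₂ => ⟨h₁.1.trans h₂.1, h₁.2.1.trans h₂.2.1, h₁.2.2.trans h₂.2.2⟩⟩,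
    ?_, ?_, ?_, ?_⟩
  · rintro a b c d ⟨h₁, h₂, h₃⟩ ⟨h₄, h₅, h₆⟩
    refine ⟨?_, pc_inf_congr h₂ h₅, ?_⟩
    · rw [sup_inf_right, inf_inf_distrib_right, h₁, h₄, ← inf_inf_distrib_right,
        ← sup_inf_right]
    · rw [dm_inf, dm_inf, pc_sup, pc_sup, h₃, h₆]
  · rintro a b c d ⟨h₁, h₂, h₃⟩ ⟨h₄, h₅, h₆⟩
    refine ⟨?_, by rw [pc_sup, pc_sup, h₂, h₅], ?_⟩
    · rw [sup_sup_distrib_right, inf_sup_right, h₁, h₄, ← inf_sup_right,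
        ← sup_sup_distrib_right]
    · rw [dm_sup, dm_sup]
      exact pc_inf_congr h₃ h₆
  · rintro a b ⟨h₁, h₂, h₃⟩
    exact ⟨by rw [hproj, hproj, h₁], h₃, by rw [dm_dm, dm_dm, h₂]⟩
  · rintro a b ⟨-, h₂, -⟩
    exact ⟨by rw [h₂], by rw [h₂], by rw [h₂]⟩

theorem meetJoinRel_eq_of_meetJoinRel_dm {a x y : L} (h₁ : meetJoinRel a x y)
    (h₂ : meetJoinRel (dm a) x y) : x = y :=
  eq_of_inf_eq_sup_eq h₁.1 (dm_dm a ▸ h₂.2)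

theorem meetJoinRel_eq_of_intervalRel {m x y : L} (h₁ : meetJoinRel m x y)
    (h₂ : intervalRel m x y) : x = y := by
  have hsup : x ⊔ m = y ⊔ m :=
    eq_of_inf_eq_sup_eq h₂.1 (by rw [sup_right_comm, h₁.2, sup_right_comm])
  exact eq_of_inf_eq_sup_eq h₁.1 hsup

theorem SubdirectlyIrreducible.eq_of_rel_or_eq_of_rel (hsi : SubdirectlyIrreducible L)
    {θ₁ θ₂ : L → L → Prop} (h₁ : IsCongruence θ₁) (h₂ : IsCongruence θ₂)
    (h : ∀ x y, θ₁ x y → θ₂ x y → x = y) :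
    (∀ x y, θ₁ x y → x = y) ∨ (∀ x y, θ₂ x y → x = y) := by
  obtain ⟨μ, hμ, hμne, hmin⟩ := hsi
  obtain ⟨p, q, hpq, hne⟩ : ∃ p q, μ p q ∧ p ≠ q := by
    by_contra! hμeq
    exact hμne (funext₂ fun a b => propext ⟨hμeq a b, fun hab => hab ▸ hμ.1.refl a⟩)
  by_contra! hθ
  obtain ⟨⟨x₁, y₁, hxy₁, hne₁⟩, ⟨x₂, y₂, hxy₂, hne₂⟩⟩ := hθ
  exact hne (h p q (hmin θ₁ h₁ (fun e => hne₁ (by subst e; exact hxy₁)) p q hpq)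
    (hmin θ₂ h₂ (fun e => hne₂ (by subst e; exact hxy₂)) p q hpq))

theorem le_dm_or_dm_le (hsi : SubdirectlyIrreducible L) {a : L} (ha : pc a = ⊥)
    (hda : pc (dm a) = ⊥) : a ≤ dm a ∨ dm a ≤ a := by
  rcases hsi.eq_of_rel_or_eq_of_rel (isCongruence_meetJoinRel ha)
    (isCongruence_meetJoinRel hda) (fun _ _ => meetJoinRel_eq_of_meetJoinRel_dm) with h | h
  · right
    refine inf_eq_right.mp (h (a ⊓ dm a) (dm a) ⟨?_, ?_⟩) <;> simp [inf_comm]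
  · left
    refine inf_eq_left.mp (h (a ⊓ dm a) a ⟨?_, ?_⟩) <;> simp [dm_dm]

theorem eq_or_dm_eq_of_le_dm (hsi : SubdirectlyIrreducible L)
    (hid : ∀ a b : L, pc a ≤ C b ⊔ pc (T a)) {d m : L} (hd : pc d = ⊥) (hdm : d ≤ m)
    (hm : m ≤ dm m) : m = d ∨ dm m = m := by
  rcases hsi.eq_of_rel_or_eq_of_rel (isCongruence_meetJoinRel (pc_eq_bot_of_le hd hdm))
    (isCongruence_intervalRel hm) (fun _ _ => meetJoinRel_eq_of_intervalRel) with h | h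
  · right
    refine (h m (dm m) ⟨?_, ?_⟩).symm
    · rw [inf_idem, inf_eq_right.mpr hm]
    · rw [sup_idem, sup_eq_right.mpr hm]
  · left
    have hdd : d ≤ dm d := hdm.trans (hm.trans (dm_anti hdm))
    refine h m d ⟨by rw [sup_idem, sup_eq_right.mpr hdm], ?_, ?_⟩
    · rw [pc_eq_bot_of_le hd hdm, hd]
    · rw [pc_eq_bot_of_le hd (hdm.trans hm), pc_dm_eq_bot hid hd hdd]

theorem dm_eq_self_of_mem_Icc_of_ne (hsi : SubdirectlyIrreducible L)
    (hid : ∀ a b : L, pc a ≤ C b ⊔ pc (T a)) {d a : L} (hd : pc d = ⊥) (hda : d ≤ a)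
    (had' : a ≤ dm d) (hne : a ≠ d) (hne' : a ≠ dm d) : dm a = a := by
  have hdda : d ≤ dm a := le_dm_comm.mp had'
  rcases le_dm_or_dm_le hsi (pc_eq_bot_of_le hd hda) (pc_eq_bot_of_le hd hdda) with h | h
  · exact (eq_or_dm_eq_of_le_dm hsi hid hd hda h).resolve_left hne
  · rcases eq_or_dm_eq_of_le_dm hsi hid hd hdda (by rwa [dm_dm]) with h' | h'
    · exact absurd (by rw [← h', dm_dm]) hne'
    · rw [dm_dm] at h'
      exact h'.symm

theorem Kleene.subsingleton_fixedPoints (hk : Kleene L) :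
    (Function.fixedPoints (dm : L → L)).Subsingleton := fun a ha b hb => by
  have hab := hk a b
  have hba := hk b a
  rw [ha.eq, hb.eq, inf_idem, sup_idem] at hab hba
  exact le_antisymm hab hba

end PMAlgebra

open PMAlgebra

theorem interval_encard_le_three_general {L : Type*} [PMAlgebra L]
    (hk : Kleene L) (hsi : SubdirectlyIrreducible L)
    (hid : ∀ a b : L, pc a ≤ C b ⊔ pc (T a))
    (d : L) (hd : pc d = ⊥) :
    {a : L | d ≤ a ∧ a ≤ dm d}.encard ≤ 3 := by
  have hsub :
      {a : L | d ≤ a ∧ a ≤ dm d} ⊆ insert d (insert (dm d) (Function.fixedPoints dm)) := by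
    rintro a ⟨hda, had'⟩
    by_cases hne : a = d
    · exact Or.inl hne
    by_cases hne' : a = dm d
    · exact Or.inr (Or.inl hne')
    exact Or.inr (Or.inr (dm_eq_self_of_mem_Icc_of_ne hsi hid hd hda had' hne hne'))
  have hfix : (Function.fixedPoints (dm : L → L)).encard ≤ 1 :=
    Set.encard_le_one_iff_subsingleton.mpr hk.subsingleton_fixedPoints
  calc {a : L | d ≤ a ∧ a ≤ dm d}.encard
      ≤ (insert d (insert (dm d) (Function.fixedPoints dm))).encard := Set.encard_le_encard hsub
    _ ≤ (Function.fixedPoints dm).encard + 1 + 1 :=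
      (Set.encard_insert_le _ _).trans (add_le_add_left (Set.encard_insert_le _ _) 1)
    _ ≤ 1 + 1 + 1 := by gcongr
    _ = 3 := by norm_num

/-- In a subdirectly irreducible pk-algebra satisfying `a* ≤ C(b) ∨ T(a)*` with
least dense element `d`, the interval `[d, d']` has at most three elements. -/
theorem interval_encard_le_three {L : Type*} [PMAlgebra L]
    (hk : Kleene L) (hsi : SubdirectlyIrreducible L)
    (hid : ∀ a b : L, pc a ≤ C b ⊔ pc (T a))
    (d : L) (hd : pc d = ⊥) (hleast : ∀ e : L, pc e = ⊥ → d ≤ e) :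
    {a : L | d ≤ a ∧ a ≤ dm d}.encard ≤ 3 :=
  interval_encard_le_three_general hk hsi hid d hd
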